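/- Let (A,≻,≺,∗) be a noncommutative pre-Poisson algebra. Define x·y = x≻y + x≺y and {x,y} = x∗y − y∗x. Then (A,·,{-,-}) is a noncommutative Poisson algebra: · is associative, {-,-} is a Lie bracket, and the Leibniz rule {x, y·z} = {x,y}·z + y·{x,z} holds for all x,y,z ∈ A. -/
import Mathlib


open LinearMap Module

/-- `(A, succ, prec)` is a dendriform algebra. -/
def IsDendriform (K : Type*) [Field K] {A : Type*} [AddCommGroup A] [Module K A]
    (succ prec : A →ₗ[K] A →ₗ[K] A) : Prop :=
  (∀ x y z, prec (prec x y) z = prec x (succ y z + prec y z)) ∧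
  (∀ x y z, prec (succ x y) z = succ x (prec y z)) ∧
  (∀ x y z, succ x (succ y z) = succ (succ x y + prec x y) z)

/-- `(A, ast)` is a pre-Lie algebra. -/
def IsPreLie (K : Type*) [Field K] {A : Type*} [AddCommGroup A] [Module K A]
    (ast : A →ₗ[K] A →ₗ[K] A) : Prop :=
  ∀ x y z, ast (ast x y) z - ast x (ast y z) = ast (ast y x) z - ast y (ast x z)

/-- `(A, succ, prec, ast)` is a noncommutative pre-Poisson algebra. -/
def IsNCPrePoisson (K : Type*) [Field K] {A : Type*} [AddCommGroup A] [Module K A]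
    (succ prec ast : A →ₗ[K] A →ₗ[K] A) : Prop :=
  IsDendriform K succ prec ∧ IsPreLie K ast ∧
  (∀ x y z, succ (ast x y - ast y x) z = ast x (succ y z) - succ y (ast x z)) ∧
  (∀ x y z, prec x (ast y z - ast z y) = ast y (prec x z) - prec (ast y x) z) ∧
  (∀ x y z, ast (succ x y + prec x y) z = prec (ast x z) y + succ x (ast y z))

/-- A noncommutative pre-Poisson algebra is coherent if
`(x≻y + x≺y)∗z = x∗(y≻z) + y∗(z≺x)`. -/
def IsCoherentNCPrePoisson (K : Type*) [Field K] {A : Type*} [AddCommGroup A]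
    [Module K A] (succ prec ast : A →ₗ[K] A →ₗ[K] A) : Prop :=
  IsNCPrePoisson K succ prec ast ∧
  (∀ x y z, ast (succ x y + prec x y) z = ast x (succ y z) + ast y (prec z x))

/-- `(P, mul, br)` is a noncommutative Poisson algebra. -/
def IsNCPoisson (K : Type*) [Field K] {P : Type*} [AddCommGroup P] [Module K P]
    (mul br : P →ₗ[K] P →ₗ[K] P) : Prop :=
  (∀ x y z, mul (mul x y) z = mul x (mul y z)) ∧
  (∀ x y, br x y = - br y x) ∧
  (∀ x y z, br (br x y) z + br (br y z) x + br (br z x) y = 0) ∧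
  (∀ x y z, br x (mul y z) = mul (br x y) z + mul y (br x z))

/-- the sub-adjacent noncommutative Poisson algebra of a
noncommutative pre-Poisson algebra: `x·y = x≻y + x≺y`, `{x,y} = x∗y - y∗x`. -/
theorem subadjacent_ncPoisson {K A : Type*} [Field K] [CharZero K]
    [AddCommGroup A] [Module K A]
    (succ prec ast : A →ₗ[K] A →ₗ[K] A)
    (h : IsNCPrePoisson K succ prec ast) :
    IsNCPoisson K (succ + prec) (ast - ast.flip) := by

  obtain ⟨⟨d1, d2, d3⟩, pl, c1, c2, c3⟩ := h
  simp only [IsNCPoisson, LinearMap.add_apply, LinearMap.sub_apply, LinearMap.flip_apply,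
    map_add, map_sub]
  refine ⟨fun x y z => ?_, fun x y => by abel, fun x y z => ?_, fun x y z => ?_⟩
  · linear_combination (norm := (simp only [map_add, map_sub, map_smul, LinearMap.add_apply, LinearMap.sub_apply, LinearMap.smul_apply]; abel)) d1 x y z + d2 x y z - d3 x y z
  · linear_combination (norm := abel) pl x y z + pl y z x + pl z x y
  · linear_combination (norm := (simp only [map_add, map_sub, map_smul, LinearMap.add_apply, LinearMap.sub_apply, LinearMap.smul_apply]; abel)) -c1 x y z - c2 y x z - c3 y z x
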